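/- Assume irreflexivity of <_α on worms. For worms A, A₁, …, A_k all with modalities ≥ α, GLP_Λ proves either ⟨α⟩(A ∧ ¬A₁ ∧ ⋯ ∧ ¬A_k) ↔ ⟨α⟩A, or (A ∧ ¬A₁ ∧ ⋯ ∧ ¬A_k) ↔ ⊥. -/

import Mathlib

inductive Formula (L : Type) : Type where
  | bot : Formula L
  | var : Nat → Formula L
  | imp : Formula L → Formula L → Formula L
  | box : L → Formula L → Formula L

namespace Formula

variable {L : Type}

def neg (φ : Formula L) : Formula L := imp φ bot
def top : Formula L := neg bot
def and (φ ψ : Formula L) : Formula L := neg (imp φ ψ.neg)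
def or (φ ψ : Formula L) : Formula L := imp φ.neg ψ
def iff (φ ψ : Formula L) : Formula L := (imp φ ψ).and (imp ψ φ)
def dia (α : L) (φ : Formula L) : Formula L := neg (box α φ.neg)

end Formula

open Formula

/-- Provability in the polymodal provability logic `GLP_Λ` over a linear order. -/
inductive GLP {L : Type} [LinearOrder L] : Formula L → Prop where
  | k1 : ∀ φ ψ : Formula L, GLP (φ.imp (ψ.imp φ))
  | k2 : ∀ φ ψ χ : Formula L, GLP ((φ.imp (ψ.imp χ)).imp ((φ.imp ψ).imp (φ.imp χ)))
  | k3 : ∀ φ ψ : Formula L, GLP ((φ.neg.imp ψ.neg).imp (ψ.imp φ))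
  | dist : ∀ (α : L) (φ ψ : Formula L), GLP ((Formula.box α (φ.imp ψ)).imp ((Formula.box α φ).imp (Formula.box α ψ)))
  | lob : ∀ (α : L) (φ : Formula L), GLP ((Formula.box α ((Formula.box α φ).imp φ)).imp (Formula.box α φ))
  | trans : ∀ (α β : L) (φ : Formula L), α ≤ β → GLP ((Formula.box α φ).imp (Formula.box β (Formula.box α φ)))
  | negintro : ∀ (α β : L) (φ : Formula L), α < β → GLP ((dia α φ).imp (Formula.box β (dia α φ)))
  | mono : ∀ (α β : L) (φ : Formula L), α ≤ β → GLP ((Formula.box α φ).imp (Formula.box β φ))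
  | mp : ∀ φ ψ : Formula L, GLP (φ.imp ψ) → GLP φ → GLP ψ
  | nec : ∀ (α : L) (φ : Formula L), GLP φ → GLP (Formula.box α φ)

/-- The worm (iterated consistency statement) associated to a list of modalities. -/
def worm {L : Type} : List L → Formula L
  | [] => Formula.top
  | α :: w => Formula.dia α (worm w)

/-- `Lt α A B` iff `GLP ⊢ B → ⟨α⟩A`. -/
def Lt {L : Type} [LinearOrder L] (α : L) (A B : List L) : Prop :=
  GLP ((worm B).imp (Formula.dia α (worm A)))

def Le {L : Type} [LinearOrder L] (α : L) (A B : List L) : Prop :=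
  Lt α A B ∨ A = B

def conjNegWorms {L : Type} (l : List (List L)) : Formula L :=
  (l.map (fun b => (worm b).neg)).foldr Formula.and Formula.top

/-!
Worms in `𝕎_l` are linearly ordered by `<_l` up to provable equivalence. This is proved by
induction on total length, splitting each worm at the first occurrence of the least modality `m`,
`A = C ⟨m⟩ D` with `C ∈ 𝕎_{>m}`, so that `A ↔ C ∧ ⟨m⟩D`; since `⟨m⟩`-formulas are `[ν]`-stable for
`ν > m`, the comparison of `A` and `B` reduces to comparisons of shorter worms. The same induction
shows that if `⊬ A → B` then `⊢ A ∧ B → ⟨l⟩A`. Hence, if `⊬ A → Aᵢ` for every `i`, then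
`A ∧ [α]¬A` refutes every `Aᵢ`, and Löb's axiom in the form `⟨α⟩A → ⟨α⟩(A ∧ [α]¬A)` gives
`⟨α⟩A → ⟨α⟩(A ∧ ⋀ᵢ ¬Aᵢ)`; otherwise `A ∧ ⋀ᵢ ¬Aᵢ` is refutable.
-/

theorem List.exists_eq_append_cons_of_mem_of_forall_le {α : Type*} [PartialOrder α] {m : α}
    {A : List α} (hm : m ∈ A) (hA : ∀ a ∈ A, m ≤ a) :
    ∃ C D, A = C ++ m :: D ∧ ∀ c ∈ C, m < c := by
  obtain ⟨C, D, rfl, hmC⟩ := List.eq_append_cons_of_mem hm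
  exact ⟨C, D, rfl, fun c hc =>
    (hA c (List.mem_append_left _ hc)).lt_of_ne (by rintro rfl; exact hmC hc)⟩

theorem List.exists_mem_append_forall_le {α : Type*} [LinearOrder α] {X Y : List α}
    (h : X ++ Y ≠ []) : ∃ m ∈ X ++ Y, (∀ x ∈ X, m ≤ x) ∧ ∀ y ∈ Y, m ≤ y :=
  ⟨(X ++ Y).min h, List.min_mem h,
    fun _ hx => List.min_le_of_mem (List.mem_append_left _ hx),
    fun _ hy => List.min_le_of_mem (List.mem_append_right _ hy)⟩

namespace GLP

variable {L : Type} [LinearOrder L] {φ ψ χ : Formula L}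

theorem imp_refl (φ : Formula L) : GLP (φ.imp φ) :=
  mp _ _ (mp _ _ (k2 φ (φ.imp φ) φ) (k1 φ (φ.imp φ))) (k1 φ φ)

theorem imp_intro (h : GLP ψ) : GLP (φ.imp ψ) :=
  mp _ _ (k1 ψ φ) h

theorem imp_trans (h₁ : GLP (φ.imp ψ)) (h₂ : GLP (ψ.imp χ)) : GLP (φ.imp χ) :=
  mp _ _ (mp _ _ (k2 φ ψ χ) (imp_intro h₂)) h₁

inductive Derivable : List (Formula L) → Formula L → Prop
  | hyp {Γ : List (Formula L)} {φ : Formula L} : φ ∈ Γ → Derivable Γ φ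
  | thm {Γ : List (Formula L)} {φ : Formula L} : GLP φ → Derivable Γ φ
  | mp {Γ : List (Formula L)} {φ ψ : Formula L} :
      Derivable Γ (φ.imp ψ) → Derivable Γ φ → Derivable Γ ψ

theorem Derivable.hyp₀ {Γ : List (Formula L)} : Derivable (φ :: Γ) φ :=
  .hyp List.mem_cons_self

theorem Derivable.hyp₁ {Γ : List (Formula L)} : Derivable (ψ :: φ :: Γ) φ :=
  .hyp (List.mem_cons_of_mem _ List.mem_cons_self)

theorem Derivable.hyp₂ {Γ : List (Formula L)} : Derivable (χ :: ψ :: φ :: Γ) φ :=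
  .hyp (List.mem_cons_of_mem _ (List.mem_cons_of_mem _ List.mem_cons_self))

theorem Derivable.deduction {Γ : List (Formula L)} (h : Derivable (φ :: Γ) ψ) :
    Derivable Γ (φ.imp ψ) := by
  generalize hΔ : φ :: Γ = Δ at h
  induction h with
  | hyp hmem =>
    subst hΔ
    rcases List.mem_cons.1 hmem with rfl | hmem
    · exact .thm (imp_refl _)
    · exact .mp (.thm (k1 _ _)) (.hyp hmem)
  | thm h => exact .thm (imp_intro h)
  | mp _ _ ih₁ ih₂ => exact .mp (.mp (.thm (k2 _ _ _)) ih₁) ih₂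

theorem of_derivable_nil (h : Derivable [] φ) : GLP φ := by
  generalize hΔ : ([] : List (Formula L)) = Δ at h
  induction h with
  | hyp hmem => subst hΔ; simp at hmem
  | thm h => exact h
  | mp _ _ ih₁ ih₂ => exact mp _ _ ih₁ ih₂

theorem imp_of_derivable (h : Derivable [φ] ψ) : GLP (φ.imp ψ) :=
  of_derivable_nil h.deduction

theorem imp_top (φ : Formula L) : GLP (φ.imp Formula.top) :=
  imp_intro (imp_refl Formula.bot)

theorem bot_imp (φ : Formula L) : GLP (Formula.bot.imp φ) :=
  mp _ _ (k3 φ Formula.bot) (imp_intro (imp_refl Formula.bot))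

theorem imp_bot (h₁ : GLP (χ.imp φ)) (h₂ : GLP (χ.imp φ.neg)) : GLP (χ.imp Formula.bot) :=
  mp _ _ (mp _ _ (k2 χ φ Formula.bot) h₂) h₁

theorem imp_neg_neg (φ : Formula L) : GLP (φ.imp φ.neg.neg) :=
  imp_of_derivable (.deduction (.mp .hyp₀ .hyp₁))

theorem neg_neg_imp (φ : Formula L) : GLP (φ.neg.neg.imp φ) :=
  mp _ _ (k3 φ φ.neg.neg) (imp_neg_neg φ.neg)

theorem contrapose (h : GLP (φ.imp ψ)) : GLP (ψ.neg.imp φ.neg) :=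
  imp_of_derivable (.deduction (.mp .hyp₁ (.mp (.thm h) .hyp₀)))

theorem imp_imp_and (φ ψ : Formula L) : GLP (φ.imp (ψ.imp (φ.and ψ))) :=
  of_derivable_nil (.deduction (.deduction (.deduction (.mp (.mp .hyp₀ .hyp₂) .hyp₁))))

theorem and_left : GLP ((φ.and ψ).imp φ) :=
  imp_of_derivable (.mp (.thm (neg_neg_imp φ)) (.deduction (.mp .hyp₁
    (.deduction (.deduction (.mp .hyp₂ .hyp₁))))))

theorem and_right : GLP ((φ.and ψ).imp ψ) :=
  imp_of_derivable (.mp (.thm (neg_neg_imp ψ)) (.deduction (.mp .hyp₁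
    (.mp (.thm (k1 _ _)) .hyp₀))))

theorem and_intro (h₁ : GLP (χ.imp φ)) (h₂ : GLP (χ.imp ψ)) : GLP (χ.imp (φ.and ψ)) :=
  imp_of_derivable (.mp (.mp (.thm (imp_imp_and φ ψ)) (.mp (.thm h₁) .hyp₀))
    (.mp (.thm h₂) .hyp₀))

theorem imp_and_iff : GLP (χ.imp (φ.and ψ)) ↔ GLP (χ.imp φ) ∧ GLP (χ.imp ψ) :=
  ⟨fun h => ⟨h.imp_trans and_left, h.imp_trans and_right⟩, fun h => and_intro h.1 h.2⟩

theorem iff_intro (h₁ : GLP (φ.imp ψ)) (h₂ : GLP (ψ.imp φ)) : GLP (φ.iff ψ) :=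
  mp _ _ (mp _ _ (imp_imp_and _ _) h₁) h₂

theorem neg_and_imp (φ ψ : Formula L) : GLP ((φ.and ψ).neg.imp (ψ.imp φ.neg)) :=
  of_derivable_nil (.deduction (.deduction (.deduction (.mp .hyp₂
    (.mp (.mp (.thm (imp_imp_and φ ψ)) .hyp₀) .hyp₁)))))

theorem and_imp_neg_comm (h : GLP ((φ.and ψ).imp χ.neg)) : GLP ((φ.and χ).imp ψ.neg) :=
  imp_of_derivable (.deduction (.mp
    (.mp (.thm h) (.mp (.mp (.thm (imp_imp_and φ ψ)) (.mp (.thm and_left) .hyp₁)) .hyp₀))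
    (.mp (.thm and_right) .hyp₁)))

variable {l β : L}

theorem box_mono (h : GLP (φ.imp ψ)) : GLP ((Formula.box β φ).imp (Formula.box β ψ)) :=
  mp _ _ (dist β φ ψ) (nec β _ h)

theorem dia_mono (h : GLP (φ.imp ψ)) : GLP ((dia β φ).imp (dia β ψ)) :=
  contrapose (box_mono (contrapose h))

theorem dia_imp_dia_of_le (h : l ≤ β) (φ : Formula L) : GLP ((dia β φ).imp (dia l φ)) :=
  contrapose (mono l β φ.neg h)

theorem dia_dia_imp_dia (h : l ≤ β) (φ : Formula L) :
    GLP ((dia β (dia l φ)).imp (dia l φ)) :=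
  contrapose ((trans l β φ.neg h).imp_trans (box_mono (imp_neg_neg _)))

/-- `⟨l⟩ψ → [β]⟨l⟩ψ` lets the `⟨l⟩`-conjunct be carried inside `⟨β⟩`. -/
theorem imp_dia_and_dia (hlt : l < β) (h₁ : GLP (χ.imp (dia β φ)))
    (h₂ : GLP (χ.imp (dia l ψ))) :
    GLP (χ.imp (dia β (φ.and (dia l ψ)))) := by
  have hbox : GLP ((Formula.box β (φ.and (dia l ψ)).neg).imp
      ((Formula.box β (dia l ψ)).imp (Formula.box β φ.neg))) :=
    (box_mono (neg_and_imp φ (dia l ψ))).imp_trans (dist β _ _)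
  exact imp_of_derivable (.deduction (.mp (.mp (.thm h₁) .hyp₁)
    (.mp (.mp (.thm hbox) .hyp₀) (.mp (.thm (h₂.imp_trans (negintro l β ψ hlt))) .hyp₁))))

theorem dia_imp_dia_and_box_neg (β : L) (φ : Formula L) :
    GLP ((dia β φ).imp (dia β (φ.and (Formula.box β φ.neg)))) :=
  contrapose ((box_mono (neg_and_imp φ (Formula.box β φ.neg))).imp_trans (lob β φ.neg))

end GLP

open GLP

section Worms

variable {L : Type} [LinearOrder L]

theorem worm_append_imp (C D : List L) : GLP ((worm (C ++ D)).imp (worm C)) := by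
  induction C with
  | nil => exact imp_top _
  | cons c C ih => exact dia_mono ih

theorem worm_append_cons_imp_dia {m : L} {C : List L} (hC : ∀ c ∈ C, m ≤ c) (D : List L) :
    GLP ((worm (C ++ m :: D)).imp (dia m (worm D))) := by
  induction C with
  | nil => exact imp_refl _
  | cons c C ih =>
    exact (dia_mono (ih fun b hb => hC b (List.mem_cons_of_mem _ hb))).imp_trans
      (dia_dia_imp_dia (hC c List.mem_cons_self) _)

theorem and_dia_imp_worm_append_cons {m : L} {C : List L} (hC : ∀ c ∈ C, m < c) (D : List L) :
    GLP (((worm C).and (dia m (worm D))).imp (worm (C ++ m :: D))) := by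
  induction C with
  | nil => exact and_right
  | cons c C ih =>
    exact (imp_dia_and_dia (hC c List.mem_cons_self) and_left and_right).imp_trans
      (dia_mono (ih fun b hb => hC b (List.mem_cons_of_mem _ hb)))

theorem Lt.of_le {l l' : L} {A B : List L} (hle : l ≤ l') (h : Lt l' A B) : Lt l A B :=
  imp_trans h (dia_imp_dia_of_le hle _)

def WormEquiv (A B : List L) : Prop :=
  GLP ((worm A).imp (worm B)) ∧ GLP ((worm B).imp (worm A))

def Comparable (l : L) (A B : List L) : Prop :=
  Lt l A B ∨ WormEquiv A B ∨ Lt l B A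

theorem Comparable.symm {l : L} {A B : List L} (h : Comparable l A B) : Comparable l B A := by
  rcases h with h | h | h
  exacts [.inr (.inr h), .inr (.inl ⟨h.2, h.1⟩), .inl h]

theorem Comparable.of_le {l l' : L} {A B : List L} (hle : l ≤ l') (h : Comparable l' A B) :
    Comparable l A B := by
  rcases h with h | h | h
  exacts [.inl (h.of_le hle), .inr (.inl h), .inr (.inr (h.of_le hle))]

theorem dia_imp_dia_of_lt_or_equiv {m : L} {A B : List L} (h : Lt m A B ∨ WormEquiv A B) :
    GLP ((dia m (worm B)).imp (dia m (worm A))) := by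
  rcases h with h | h
  · exact (dia_mono h).imp_trans (dia_dia_imp_dia le_rfl _)
  · exact dia_mono h.2

section Heads

variable {m : L} {A B C D E F : List L}

theorem worm_equiv_of_heads (hCE : WormEquiv C E)
    (hA : GLP ((worm A).imp ((worm C).and (dia m (worm F)))))
    (hA' : GLP (((worm C).and (dia m (worm D))).imp (worm A)))
    (hB : GLP ((worm B).imp ((worm E).and (dia m (worm D)))))
    (hB' : GLP (((worm E).and (dia m (worm F))).imp (worm B))) : WormEquiv A B :=
  ⟨(hA.imp_trans (and_intro (and_left.imp_trans hCE.1) and_right)).imp_trans hB',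
    (hB.imp_trans (and_intro (and_left.imp_trans hCE.2) and_right)).imp_trans hA'⟩

theorem lt_of_heads {ν : L} (hmν : m < ν) (hCE : Lt ν C E)
    (hB : GLP ((worm B).imp ((worm E).and (dia m (worm D)))))
    (hA' : GLP (((worm C).and (dia m (worm D))).imp (worm A))) : Lt ν A B :=
  (imp_dia_and_dia hmν ((hB.imp_trans and_left).imp_trans hCE) (hB.imp_trans and_right)).imp_trans
    (dia_mono hA')

/-- Under these hypotheses `A ↔ C ∧ ⟨m⟩D ∧ ⟨m⟩F` and `B ↔ E ∧ ⟨m⟩D ∧ ⟨m⟩F`, so `A` and `B`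
compare as their heads `C` and `E` do. -/
theorem comparable_of_heads
    (ih : ∀ ν, m < ν → (∀ c ∈ C, ν ≤ c) → (∀ e ∈ E, ν ≤ e) →
      Comparable ν C E)
    (hC : ∀ c ∈ C, m < c) (hE : ∀ e ∈ E, m < e)
    (hA : GLP ((worm A).imp ((worm C).and (dia m (worm F)))))
    (hA' : GLP (((worm C).and (dia m (worm D))).imp (worm A)))
    (hB : GLP ((worm B).imp ((worm E).and (dia m (worm D)))))
    (hB' : GLP (((worm E).and (dia m (worm F))).imp (worm B))) : Comparable m A B := by
  by_cases hnil : C ++ E = []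
  · obtain ⟨rfl, rfl⟩ := List.append_eq_nil_iff.1 hnil
    exact .inr (.inl (worm_equiv_of_heads ⟨imp_refl _, imp_refl _⟩ hA hA' hB hB'))
  obtain ⟨ν, hν, hνC, hνE⟩ := List.exists_mem_append_forall_le hnil
  have hmν : m < ν := (List.mem_append.1 hν).elim (hC ν) (hE ν)
  refine Comparable.of_le hmν.le ?_
  rcases ih ν hmν hνC hνE with h | h | h
  · exact .inl (lt_of_heads hmν h hB hA')
  · exact .inr (.inl (worm_equiv_of_heads h hA hA' hB hB'))
  · exact .inr (.inr (lt_of_heads hmν h hA hB'))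

end Heads

theorem comparable_of_mem_right {m : L} {A B : List L}
    (ih : ∀ X Y : List L, X.length + Y.length < A.length + B.length →
      ∀ l, (∀ x ∈ X, l ≤ x) → (∀ y ∈ Y, l ≤ y) → Comparable l X Y)
    (hA : ∀ a ∈ A, m ≤ a) (hB : ∀ b ∈ B, m ≤ b) (hmB : m ∈ B) : Comparable m A B := by
  obtain ⟨E, F, rfl, hE⟩ := List.exists_eq_append_cons_of_mem_of_forall_le hmB hB
  have hF : ∀ f ∈ F, m ≤ f := fun f hf => hB f (by simp [hf])
  have hBE := worm_append_imp E (m :: F)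
  have hBF := worm_append_cons_imp_dia (fun e he => (hE e he).le) F
  have hB' := and_dia_imp_worm_append_cons hE F
  rcases ih A F (by grind) m hA hF with hFA | hAF | hAF
  · exact .inl (hBF.imp_trans (dia_imp_dia_of_lt_or_equiv (.inl hFA)))
  · exact .inl (hBF.imp_trans (dia_imp_dia_of_lt_or_equiv (.inr hAF)))
  -- Now `A → ⟨m⟩F`; if `m ∉ A`, then `A` serves as its own head, with `F` as tail.
  by_cases hmA : m ∈ A
  · obtain ⟨C, D, rfl, hC⟩ := List.exists_eq_append_cons_of_mem_of_forall_le hmA hA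
    have hD : ∀ d ∈ D, m ≤ d := fun d hd => hA d (by simp [hd])
    have hAD := worm_append_cons_imp_dia (fun c hc => (hC c hc).le) D
    rcases ih D _ (by grind) m hD hB with hBD | hBD | hDB
    · exact comparable_of_heads
        (fun ν _ hνC hνE => ih C E (by grind) ν hνC hνE) hC hE
        (and_intro (worm_append_imp C (m :: D)) hAF) (and_dia_imp_worm_append_cons hC D)
        (and_intro hBE hBD) hB'
    · exact .inr (.inr (hAD.imp_trans (dia_imp_dia_of_lt_or_equiv (.inr hBD.symm))))
    · exact .inr (.inr (hAD.imp_trans (dia_imp_dia_of_lt_or_equiv (.inl hDB))))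
  · have hA' : ∀ a ∈ A, m < a := fun a ha => (hA a ha).lt_of_ne (by rintro rfl; exact hmA ha)
    exact comparable_of_heads (D := F)
      (fun ν _ hνA hνE => ih A E (by grind) ν hνA hνE) hA' hE
      (and_intro (imp_refl _) hAF) and_left (and_intro hBE hBF) hB'

theorem comparable_of_forall_le {l : L} {A B : List L} (hA : ∀ a ∈ A, l ≤ a)
    (hB : ∀ b ∈ B, l ≤ b) : Comparable l A B := by
  have ih : ∀ X Y : List L, X.length + Y.length < A.length + B.length →
      ∀ l, (∀ x ∈ X, l ≤ x) → (∀ y ∈ Y, l ≤ y) → Comparable l X Y :=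
    fun X Y _ l hX hY => comparable_of_forall_le hX hY
  by_cases hnil : A ++ B = []
  · obtain ⟨rfl, rfl⟩ := List.append_eq_nil_iff.1 hnil
    exact .inr (.inl ⟨imp_refl _, imp_refl _⟩)
  obtain ⟨m, hm, hmA, hmB⟩ := List.exists_mem_append_forall_le hnil
  refine Comparable.of_le ((List.mem_append.1 hm).elim (hA m) (hB m)) ?_
  rcases List.mem_append.1 hm with hm | hm
  · exact (comparable_of_mem_right (fun X Y h => ih X Y (by omega)) hmB hmA hm).symm
  · exact comparable_of_mem_right ih hmA hmB hm
termination_by A.length + B.length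

theorem and_imp_dia_of_not_imp {l : L} {A B : List L} (hA : ∀ a ∈ A, l ≤ a)
    (hB : ∀ b ∈ B, l ≤ b) (hAB : ¬ GLP ((worm A).imp (worm B))) :
    GLP (((worm A).and (worm B)).imp (dia l (worm A))) := by
  have hB₀ : B ≠ [] := by rintro rfl; exact hAB (imp_top _)
  obtain ⟨m, hm, hmA, hmB⟩ :=
    List.exists_mem_append_forall_le (List.append_ne_nil_of_right_ne_nil A hB₀)
  refine imp_trans ?_ (dia_imp_dia_of_le ((List.mem_append.1 hm).elim (hA m) (hB m)) _)
  by_cases hmB' : m ∈ B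
  · obtain ⟨E, F, rfl, hE⟩ := List.exists_eq_append_cons_of_mem_of_forall_le hmB' hmB
    have hBF := worm_append_cons_imp_dia (fun e he => (hE e he).le) F
    have hF : ∀ f ∈ F, m ≤ f := fun f hf => hmB f (by simp [hf])
    rcases comparable_of_forall_le hmA hF with hFA | hAF | hAF
    · exact and_right.imp_trans (hBF.imp_trans (dia_imp_dia_of_lt_or_equiv (.inl hFA)))
    · exact and_right.imp_trans (hBF.imp_trans (dia_imp_dia_of_lt_or_equiv (.inr hAF)))
    by_cases hAE : GLP ((worm A).imp (worm E))
    · exact absurd ((and_intro hAE hAF).imp_trans (and_dia_imp_worm_append_cons hE F)) hAB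
    · exact (and_intro and_left (and_right.imp_trans (worm_append_imp E (m :: F)))).imp_trans
        (and_imp_dia_of_not_imp hmA (fun e he => (hE e he).le) hAE)
  · have hmA' : m ∈ A := (List.mem_append.1 hm).resolve_right hmB'
    obtain ⟨C, D, rfl, hC⟩ := List.exists_eq_append_cons_of_mem_of_forall_le hmA' hmA
    have hAC := worm_append_imp C (m :: D)
    by_cases hCB : GLP ((worm C).imp (worm B))
    · exact absurd (hAC.imp_trans hCB) hAB
    obtain ⟨ν, hν, hνC, hνB⟩ :=
      List.exists_mem_append_forall_le (List.append_ne_nil_of_right_ne_nil C hB₀)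
    have hmν : m < ν := (List.mem_append.1 hν).elim (hC ν)
      (fun h => (hmB ν h).lt_of_ne (by rintro rfl; exact hmB' h))
    have hCν : GLP (((worm (C ++ m :: D)).and (worm B)).imp (dia ν (worm C))) :=
      (and_intro (and_left.imp_trans hAC) and_right).imp_trans
        (and_imp_dia_of_not_imp hνC hνB hCB)
    have hmD : GLP (((worm (C ++ m :: D)).and (worm B)).imp (dia m (worm D))) :=
      and_left.imp_trans (worm_append_cons_imp_dia (fun c hc => (hC c hc).le) D)
    exact ((imp_dia_and_dia hmν hCν hmD).imp_trans
      (dia_mono (and_dia_imp_worm_append_cons hC D))).imp_trans (dia_imp_dia_of_le hmν.le _)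
termination_by A.length + B.length
decreasing_by all_goals subst_vars; simp only [List.length_append, List.length_cons]; omega

theorem imp_conjNegWorms_iff {χ : Formula L} {As : List (List L)} :
    GLP (χ.imp (conjNegWorms As)) ↔ ∀ B ∈ As, GLP (χ.imp (worm B).neg) := by
  induction As with
  | nil => exact ⟨fun _ _ h => absurd h List.not_mem_nil, fun _ => imp_top χ⟩
  | cons B As ih =>
    change GLP (χ.imp ((worm B).neg.and (conjNegWorms As))) ↔ _
    rw [imp_and_iff, ih, List.forall_mem_cons]

end Worms

theorem worms_closed_under_diamonds_general {L : Type} [LinearOrder L] (α : L)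
    (A : List L) (As : List (List L))
    (hAm : ∀ β ∈ A, α ≤ β) (hAsm : ∀ Ai ∈ As, ∀ β ∈ Ai, α ≤ β) :
    GLP ((Formula.dia α ((worm A).and (conjNegWorms As))).iff
        (Formula.dia α (worm A))) ∨
      GLP (((worm A).and (conjNegWorms As)).iff Formula.bot) := by
  by_cases h : ∃ Ai ∈ As, GLP ((worm A).imp (worm Ai))
  · obtain ⟨Ai, hAi, hAAi⟩ := h
    have hN := imp_conjNegWorms_iff.1 (imp_refl (conjNegWorms As)) Ai hAi
    exact .inr (iff_intro (imp_bot (and_left.imp_trans hAAi) (and_right.imp_trans hN)) (bot_imp _))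
  · push Not at h
    have hN : GLP (((worm A).and (Formula.box α (worm A).neg)).imp (conjNegWorms As)) :=
      imp_conjNegWorms_iff.2 fun Ai hAi =>
        and_imp_neg_comm (and_imp_dia_of_not_imp hAm (hAsm Ai hAi) (h Ai hAi))
    exact .inl (iff_intro (dia_mono and_left)
      ((dia_imp_dia_and_box_neg α _).imp_trans (dia_mono (and_intro and_left hN))))

/-- Assuming irreflexivity of `<_α`, for worms `A, A₁, …, A_k ∈ 𝕎_α`,
either `GLP ⊢ ⟨α⟩(A ∧ ⋀ᵢ ¬A_i) ↔ ⟨α⟩A` or `GLP ⊢ (A ∧ ⋀ᵢ ¬A_i) ↔ ⊥`. -/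
theorem worms_closed_under_diamonds {L : Type} [LinearOrder L] (α : L)
    (irrefl : ∀ (D : List L) (γ : L), ¬ GLP ((worm D).imp (Formula.dia γ (worm D))))
    (A : List L) (As : List (List L))
    (hAm : ∀ β ∈ A, α ≤ β) (hAsm : ∀ Ai ∈ As, ∀ β ∈ Ai, α ≤ β) :
    GLP ((Formula.dia α ((worm A).and (conjNegWorms As))).iff
        (Formula.dia α (worm A))) ∨
      GLP (((worm A).and (conjNegWorms As)).iff Formula.bot) :=
  worms_closed_under_diamonds_general α A As hAm hAsm
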